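/- Let d ≥ 2 and let P be a subgroup of the symmetric group on Fin d, regarded as a finite set S of permutations of Fin d, with characteristic polynomial f_S, and let α = lim_n f_S^{∘n}(1). Then: (i) if P acts transitively on Fin d, then α = 0; (ii) if P does not act transitively and some element of P has no fixed point, then 0 < α < 1; (iii) if P does not act transitively and every element of P has at least one fixed point, then α = 1. -/

import Mathlib

open Finset Filter

/-- The number of fixed points of a permutation of `Fin d`. -/
def numFix {d : ℕ} (σ : Equiv.Perm (Fin d)) : ℕ :=
  (Finset.univ.filter fun i => σ i = i).card

/-- `D S k` is the number of permutations in `S` having exactly `k` fixed points. -/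
def D {d : ℕ} (S : Finset (Equiv.Perm (Fin d))) (k : ℕ) : ℕ :=
  (S.filter fun σ => numFix σ = k).card

/-- The characteristic polynomial of a finite set of permutations of `Fin d`:
`f_S(x) = ∑_{k=1}^{d} (D_S(k)/#S)·(1 − (1 − x)^k)`. -/
noncomputable def fS {d : ℕ} (S : Finset (Equiv.Perm (Fin d))) (x : ℝ) : ℝ :=
  ∑ k ∈ Finset.Icc 1 d, ((D S k : ℝ) / (S.card : ℝ)) * (1 - (1 - x) ^ k)

/-!
Averaging over `σ ∈ S`, `f_S(x) = 1 - 𝔼[(1 - x) ^ numFix σ]`, and by Burnside's lemma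
`𝔼[numFix σ]` is the number of orbits of `P`. The limit `α` is a fixed point of `f_S` in `[0, 1]`.

* Transitive: the mean is `1`, so Bernoulli's inequality gives `f_S(x) ≤ x`, strictly for
  `0 < x ≤ 1` thanks to the identity, which has `d ≥ 2` fixed points; hence `α = 0`.
* Intransitive: the mean is at least `2`, so a second-order Bernoulli bound gives
  `s ≤ f_S(s)` for `s = 1/d²`, and monotonicity keeps every iterate above `s`. A derangement
  contributes `(1 - x) ^ 0 = 1` to the mean, so `f_S ≤ 1 - 1/#S`. If every element fixes a
  point, then `f_S(1) = 1` and the iteration is constant.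
-/

open MulAction

section Permutations

variable {d : ℕ}

lemma numFix_le (σ : Equiv.Perm (Fin d)) : numFix σ ≤ d :=
  (card_filter_le _ _).trans_eq (card_fin d)

lemma numFix_one : numFix (1 : Equiv.Perm (Fin d)) = d := by
  simp [numFix]

lemma numFix_eq_zero_iff {σ : Equiv.Perm (Fin d)} : numFix σ = 0 ↔ ∀ i, σ i ≠ i := by
  simp [numFix, filter_eq_empty_iff]

lemma isPretransitive_iff_forall_exists_mem {α : Type*} (P : Subgroup (Equiv.Perm α)) :
    IsPretransitive P α ↔ ∀ x y : α, ∃ σ ∈ P, σ x = y := by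
  simp [isPretransitive_iff, Subgroup.smul_def]

lemma sum_numFix_eq_card_orbits_mul_card (P : Subgroup (Equiv.Perm (Fin d)))
    (S : Finset (Equiv.Perm (Fin d))) (hS : ∀ σ, σ ∈ S ↔ σ ∈ P) :
    ∑ σ ∈ S, numFix σ = Nat.card (orbitRel.Quotient P (Fin d)) * #S := by
  classical
  have : Fintype (orbitRel.Quotient P (Fin d)) := Fintype.ofFinite _
  have hfix (σ : P) : Fintype.card (fixedBy (Fin d) σ) = numFix (σ : Equiv.Perm (Fin d)) := by
    rw [numFix, ← Fintype.card_subtype]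
    rfl
  have hcard : #S = Fintype.card P := (Fintype.card_of_subtype S hS).symm
  rw [sum_subtype S hS numFix, hcard, Nat.card_eq_fintype_card,
    ← sum_card_fixedBy_eq_card_orbits_mul_card_group]
  exact sum_congr rfl fun σ _ => (hfix σ).symm

lemma sum_numFix_eq_card_of_isPretransitive [NeZero d] (P : Subgroup (Equiv.Perm (Fin d)))
    [IsPretransitive P (Fin d)] (S : Finset (Equiv.Perm (Fin d))) (hS : ∀ σ, σ ∈ S ↔ σ ∈ P) :
    ∑ σ ∈ S, numFix σ = #S := by
  have : Subsingleton (orbitRel.Quotient P (Fin d)) :=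
    (pretransitive_iff_subsingleton_quotient P (Fin d)).mp inferInstance
  rw [sum_numFix_eq_card_orbits_mul_card P S hS, Nat.card_unique, one_mul]

lemma two_mul_card_le_sum_numFix (P : Subgroup (Equiv.Perm (Fin d)))
    (hP : ¬ IsPretransitive P (Fin d)) (S : Finset (Equiv.Perm (Fin d)))
    (hS : ∀ σ, σ ∈ S ↔ σ ∈ P) :
    2 * #S ≤ ∑ σ ∈ S, numFix σ := by
  rw [pretransitive_iff_subsingleton_quotient, not_subsingleton_iff_nontrivial,
    ← Finite.one_lt_card_iff_nontrivial] at hP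
  rw [sum_numFix_eq_card_orbits_mul_card P S hS]
  exact Nat.mul_le_mul_right _ hP

end Permutations

lemma le_iterate_of_le_apply {α : Type*} [Preorder α] {f : α → α} {s : Set α}
    (hf : MonotoneOn f s) (hs : Set.MapsTo f s s) {a x : α} (ha : a ∈ s) (hx : x ∈ s)
    (hfa : a ≤ f a) (hax : a ≤ x) (n : ℕ) : a ≤ f^[n] x := by
  induction n with
  | zero => exact hax
  | succ n ih =>
    rw [Function.iterate_succ_apply']
    exact hfa.trans (hf ha (hs.iterate n hx) ih)

lemma one_sub_pow_le {s : ℝ} (hs0 : 0 ≤ s) (hs1 : s ≤ 1) (k : ℕ) :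
    (1 - s) ^ k ≤ 1 - k * s + (k * s) ^ 2 := by
  induction k with
  | zero => simp
  | succ k ih =>
    have hk : (0 : ℝ) ≤ k := k.cast_nonneg
    calc (1 - s) ^ (k + 1) = (1 - s) ^ k * (1 - s) := pow_succ _ _
      _ ≤ (1 - k * s + (k * s) ^ 2) * (1 - s) := by gcongr
      _ ≤ 1 - (k + 1 : ℕ) * s + ((k + 1 : ℕ) * s) ^ 2 := by
        push_cast
        nlinarith [mul_nonneg (mul_nonneg hk hk) (pow_nonneg hs0 3), sq_nonneg s,
          mul_nonneg hk (sq_nonneg s)]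

section CharacteristicPolynomial

variable {d : ℕ} (S : Finset (Equiv.Perm (Fin d)))

lemma fS_eq_sum_div (x : ℝ) :
    fS S x = (∑ σ ∈ S, (1 - (1 - x) ^ numFix σ)) / #S := by
  classical
  have hmaps : ∀ σ ∈ S, numFix σ ∈ Icc 0 d := fun σ _ => mem_Icc.mpr ⟨Nat.zero_le _, numFix_le σ⟩
  rw [fS, sum_subset (Icc_subset_Icc_left zero_le_one) (fun k _ hk => ?_),
    ← sum_fiberwise_of_maps_to hmaps, sum_div]
  · refine sum_congr rfl fun k _ => ?_
    rw [sum_congr rfl fun σ hσ => by rw [(mem_filter.mp hσ).2], sum_const, nsmul_eq_mul, D]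
    ring
  · obtain rfl : k = 0 := by simp_all
    simp

lemma continuous_fS : Continuous (fS S) := by
  unfold fS
  fun_prop

lemma monotoneOn_fS : MonotoneOn (fS S) (Set.Iic 1) := by
  intro x hx y hy hxy
  simp only [fS_eq_sum_div]
  gcongr with σ
  exact sub_nonneg.mpr hy

lemma mapsTo_fS : Set.MapsTo (fS S) (Set.Icc 0 1) (Set.Icc 0 1) := by
  rintro x ⟨hx0, hx1⟩
  have h0 : 0 ≤ 1 - x := by linarith
  rw [fS_eq_sum_div]
  refine ⟨div_nonneg (sum_nonneg fun σ _ => ?_) (Nat.cast_nonneg _),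
    div_le_one_of_le₀ ?_ (Nat.cast_nonneg _)⟩
  · exact sub_nonneg.mpr (pow_le_one₀ h0 (by linarith))
  · rw [card_eq_sum_ones, Nat.cast_sum]
    exact sum_le_sum fun σ _ => by simp [pow_nonneg h0]

variable {S}

lemma fS_lt_self (hd : 2 ≤ d) (h1 : 1 ∈ S) (hmean : ∑ σ ∈ S, numFix σ = #S) {x : ℝ}
    (hx0 : 0 < x) (hx1 : x ≤ 1) : fS S x < x := by
  have hS : (0 : ℝ) < #S := Nat.cast_pos.mpr (card_pos.mpr ⟨1, h1⟩)
  have hle : ∀ σ ∈ S, 1 - (1 - x) ^ numFix σ ≤ numFix σ * x := fun σ _ => by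
    have := one_add_mul_le_pow (a := -x) (by linarith) (numFix σ)
    rw [← sub_eq_add_neg] at this
    linarith
  have hlt : 1 - (1 - x) ^ d < d * x := by
    have := one_add_mul_self_lt_rpow_one_add (s := -x) (by linarith) (by linarith)
      (p := d) (by exact_mod_cast hd)
    rw [← sub_eq_add_neg, Real.rpow_natCast] at this
    linarith
  rw [fS_eq_sum_div, div_lt_iff₀ hS]
  calc ∑ σ ∈ S, (1 - (1 - x) ^ numFix σ) < ∑ σ ∈ S, (numFix σ : ℝ) * x :=
        sum_lt_sum hle ⟨1, h1, by rwa [numFix_one]⟩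
    _ = x * #S := by rw [← sum_mul, ← Nat.cast_sum, hmean, mul_comm]

lemma self_le_fS (hne : S.Nonempty) (hmean : 2 * #S ≤ ∑ σ ∈ S, numFix σ) {s : ℝ}
    (hs0 : 0 ≤ s) (hs1 : s ≤ 1) (hds : d ^ 2 * s ≤ 1) : s ≤ fS S s := by
  have hS : (0 : ℝ) < #S := Nat.cast_pos.mpr hne.card_pos
  have hle : ∀ σ ∈ S, numFix σ * s - s ≤ 1 - (1 - s) ^ numFix σ := fun σ _ => by
    have hk : (numFix σ : ℝ) ≤ d := by exact_mod_cast numFix_le σ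
    have hsq : (numFix σ * s) ^ 2 ≤ s := by
      calc (numFix σ * s) ^ 2 = (numFix σ : ℝ) ^ 2 * s * s := by ring
        _ ≤ d ^ 2 * s * s := by gcongr
        _ ≤ s := by nlinarith
    linarith [one_sub_pow_le hs0 hs1 (numFix σ)]
  have hmean' : 2 * (#S : ℝ) ≤ ∑ σ ∈ S, (numFix σ : ℝ) := by exact_mod_cast hmean
  rw [fS_eq_sum_div, le_div_iff₀ hS]
  calc s * #S ≤ ∑ σ ∈ S, ((numFix σ : ℝ) * s - s) := by
        rw [sum_sub_distrib, ← sum_mul, sum_const, nsmul_eq_mul]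
        nlinarith
    _ ≤ _ := sum_le_sum hle

lemma fS_le_one_sub_inv_card {σ₀ : Equiv.Perm (Fin d)} (hσ₀ : σ₀ ∈ S) (h0 : numFix σ₀ = 0)
    {x : ℝ} (hx : x ≤ 1) : fS S x ≤ 1 - (#S : ℝ)⁻¹ := by
  have hS : (0 : ℝ) < #S := Nat.cast_pos.mpr (card_pos.mpr ⟨σ₀, hσ₀⟩)
  have hone : 1 ≤ ∑ σ ∈ S, (1 - x) ^ numFix σ := by
    simpa [h0] using single_le_sum (fun σ _ => pow_nonneg (sub_nonneg.mpr hx) (numFix σ)) hσ₀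
  rw [fS_eq_sum_div, sum_sub_distrib, sum_const, nsmul_one, div_le_iff₀ hS, sub_mul,
    inv_mul_cancel₀ hS.ne']
  linarith

lemma fS_one (hne : S.Nonempty) (h : ∀ σ ∈ S, numFix σ ≠ 0) : fS S 1 = 1 := by
  rw [fS_eq_sum_div, sum_congr rfl fun σ hσ => by rw [sub_self, zero_pow (h σ hσ), sub_zero],
    sum_const, nsmul_one, div_self (Nat.cast_pos.mpr hne.card_pos).ne']

end CharacteristicPolynomial

theorem stmt10 (d : ℕ) (hd : 2 ≤ d) (P : Subgroup (Equiv.Perm (Fin d)))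
    (S : Finset (Equiv.Perm (Fin d))) (hS : ∀ σ, σ ∈ S ↔ σ ∈ P)
    (α : ℝ) (hα : Tendsto (fun n => (fS S)^[n] 1) atTop (nhds α)) :
    ((∀ x y : Fin d, ∃ σ ∈ P, σ x = y) → α = 0) ∧
    ((¬ (∀ x y : Fin d, ∃ σ ∈ P, σ x = y)) → (∃ σ ∈ P, ∀ i, σ i ≠ i) →
      0 < α ∧ α < 1) ∧
    ((¬ (∀ x y : Fin d, ∃ σ ∈ P, σ x = y)) → (∀ σ ∈ P, ∃ i, σ i = i) →
      α = 1) := by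
  have h1 : 1 ∈ S := (hS 1).2 P.one_mem
  have hIcc : ∀ n, (fS S)^[n] 1 ∈ Set.Icc 0 1 :=
    fun n => (mapsTo_fS S).iterate n ⟨zero_le_one, le_rfl⟩
  have hαIcc : α ∈ Set.Icc 0 1 := isClosed_Icc.mem_of_tendsto hα (Eventually.of_forall hIcc)
  have hfix : fS S α = α := isFixedPt_of_tendsto_iterate hα (continuous_fS S).continuousAt
  simp only [← isPretransitive_iff_forall_exists_mem]
  refine ⟨fun htrans => ?_, fun htrans ⟨σ₀, hσ₀, hσ₀fix⟩ => ⟨?_, ?_⟩, fun _ hfixpt => ?_⟩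
  · have : NeZero d := ⟨by omega⟩
    by_contra hα0
    have := fS_lt_self hd h1 (sum_numFix_eq_card_of_isPretransitive P S hS)
      (hαIcc.1.lt_of_ne' hα0) hαIcc.2
    linarith
  · set s : ℝ := ((d : ℝ) ^ 2)⁻¹
    have hd2 : (1 : ℝ) ≤ (d : ℝ) ^ 2 := one_le_pow₀ (by exact_mod_cast (by omega : 1 ≤ d))
    have hs : s ∈ Set.Icc 0 1 := ⟨by positivity, inv_le_one_of_one_le₀ hd2⟩
    have hsf : s ≤ fS S s := self_le_fS ⟨1, h1⟩ (two_mul_card_le_sum_numFix P htrans S hS)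
      hs.1 hs.2 (mul_inv_cancel₀ (by positivity)).le
    have hsα : s ≤ α := ge_of_tendsto' hα fun n => le_iterate_of_le_apply
      ((monotoneOn_fS S).mono Set.Icc_subset_Iic_self) (mapsTo_fS S) hs ⟨zero_le_one, le_rfl⟩
      hsf hs.2 n
    exact (inv_pos.mpr (by positivity)).trans_le hsα
  · have hle := fS_le_one_sub_inv_card ((hS σ₀).2 hσ₀) (numFix_eq_zero_iff.mpr hσ₀fix) hαIcc.2
    have : (0 : ℝ) < (#S : ℝ)⁻¹ := inv_pos.mpr (Nat.cast_pos.mpr (card_pos.mpr ⟨1, h1⟩))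
    linarith
  · have hf1 : fS S 1 = 1 := fS_one ⟨1, h1⟩ fun σ hσ => by
      obtain ⟨i, hi⟩ := hfixpt σ ((hS σ).1 hσ)
      exact numFix_eq_zero_iff.not.mpr (not_forall_not.mpr ⟨i, hi⟩)
    refine tendsto_nhds_unique hα ?_
    simp only [Function.iterate_fixed hf1, tendsto_const_nhds]
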